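/- Define σ : ℝ → ℝ by σ(t) = (1/(2π)) ∫₀^∞ r · e^{−r² t} · tanh(π r) dr. Let μ ∈ ℝ, let λ : ℕ → ℝ be strictly monotone decreasing with λ 0 < −1/4, and assume that for every t > 0 the family k ↦ exp((λ k)·t) is summable. Define c̃(t) = −σ(t) · e^{−t/4} · μ + ∑'_k exp((λ k)·t). Then the function t ↦ −(e^{t/4} / σ(t)) · c̃(t) tends to μ as t → ∞ (i.e. Tendsto along atTop to 𝓝 μ). -/

import Mathlib

open MeasureTheory Filter

noncomputable def sigmaSTF (t : ℝ) : ℝ :=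
  (1 / (2 * Real.pi)) * ∫ r in Set.Ioi (0 : ℝ), r * Real.exp (-r ^ 2 * t) * Real.tanh (Real.pi * r)

lemma my_tanh_le_one (x : ℝ) : Real.tanh x ≤ 1 := by
  rw [Real.tanh_eq_sinh_div_cosh, div_le_one (Real.cosh_pos _)]
  rw [Real.sinh_eq, Real.cosh_eq]
  nlinarith [Real.exp_pos (-x)]

lemma my_neg_one_le_tanh (x : ℝ) : -1 ≤ Real.tanh x := by
  rw [Real.tanh_eq_sinh_div_cosh, le_div_iff₀ (Real.cosh_pos _)]
  rw [Real.sinh_eq, Real.cosh_eq]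
  nlinarith [Real.exp_pos (-x), Real.exp_pos x]

lemma my_tanh_pos {x : ℝ} (hx : 0 < x) : 0 < Real.tanh x := by
  rw [Real.tanh_eq_sinh_div_cosh]
  exact div_pos (by rwa [Real.sinh_pos_iff]) (Real.cosh_pos _)

lemma my_continuous_tanh : Continuous Real.tanh := by
  have : Real.tanh = fun x => Real.sinh x / Real.cosh x := by
    funext x; exact Real.tanh_eq_sinh_div_cosh x
  rw [this]
  exact Real.continuous_sinh.div Real.continuous_cosh (fun x => (Real.cosh_pos x).ne')

lemma my_integrable (t : ℝ) (ht : 0 < t) :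
    IntegrableOn (fun r : ℝ => r * Real.exp (-r ^ 2 * t) * Real.tanh (Real.pi * r))
      (Set.Ioi (0 : ℝ)) := by
  have hgi : IntegrableOn (fun r : ℝ => r * Real.exp (-t * r ^ 2)) (Set.Ioi (0 : ℝ)) :=
    (integrable_mul_exp_neg_mul_sq ht).integrableOn
  apply Integrable.mono' hgi
  · exact (((continuous_id.mul
      ((Real.continuous_exp.comp (by continuity)))).mul
      (my_continuous_tanh.comp (continuous_const.mul continuous_id))).aestronglyMeasurable)
  · filter_upwards [ae_restrict_mem measurableSet_Ioi] with r hr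
    have hr0 : (0 : ℝ) < r := hr
    have h1 : |Real.tanh (Real.pi * r)| ≤ 1 :=
      abs_le.mpr ⟨my_neg_one_le_tanh _, my_tanh_le_one _⟩
    have : ‖r * Real.exp (-r ^ 2 * t) * Real.tanh (Real.pi * r)‖
        = r * Real.exp (-r ^ 2 * t) * |Real.tanh (Real.pi * r)| := by
      rw [Real.norm_eq_abs, abs_mul, abs_mul]
      rw [abs_of_pos hr0, abs_of_pos (Real.exp_pos _)]
    rw [this]
    have h2 : -r ^ 2 * t = -t * r ^ 2 := by ring
    rw [h2]
    nlinarith [Real.exp_pos (-t * r ^ 2), mul_pos hr0 (Real.exp_pos (-t * r ^ 2))]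

/-- lower bound for sigmaSTF -/
lemma my_sigma_lb (b : ℝ) (hb : 0 < b) (t : ℝ) (ht : 0 < t) :
    (1 / (2 * Real.pi)) * ((b - b / 2) * (b / 2 * Real.exp (-b ^ 2 * t)
      * (Real.sinh (Real.pi * (b / 2)) / Real.cosh (Real.pi * b)))) ≤ sigmaSTF t := by
  have hπ : 0 < Real.pi := Real.pi_pos
  set a := b / 2 with ha
  have ha0 : 0 < a := by positivity
  have hab : a < b := by rw [ha]; linarith
  have hfi := my_integrable t ht
  have hnn : 0 ≤ᵐ[volume.restrict (Set.Ioi (0:ℝ))]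
      (fun r : ℝ => r * Real.exp (-r ^ 2 * t) * Real.tanh (Real.pi * r)) := by
    filter_upwards [ae_restrict_mem measurableSet_Ioi] with r hr
    have hr0 : (0 : ℝ) < r := hr
    have := my_tanh_pos (mul_pos hπ hr0)
    positivity
  have hsub : Set.Ioc a b ≤ᵐ[volume] Set.Ioi (0 : ℝ) :=
    HasSubset.Subset.eventuallyLE (fun x hx => lt_trans ha0 hx.1)
  have h1 : ∫ r in Set.Ioc a b, r * Real.exp (-r ^ 2 * t) * Real.tanh (Real.pi * r)
      ≤ ∫ r in Set.Ioi (0:ℝ), r * Real.exp (-r ^ 2 * t) * Real.tanh (Real.pi * r) :=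
    setIntegral_mono_set hfi hnn hsub
  set K : ℝ := Real.sinh (Real.pi * a) / Real.cosh (Real.pi * b) with hK
  have hK0 : 0 < K := div_pos (Real.sinh_pos_iff.mpr (by positivity)) (Real.cosh_pos _)
  have h2 : ∫ r in Set.Ioc a b, (a * Real.exp (-b ^ 2 * t) * K)
      ≤ ∫ r in Set.Ioc a b, r * Real.exp (-r ^ 2 * t) * Real.tanh (Real.pi * r) := by
    apply setIntegral_mono_on
    · exact integrableOn_const measure_Ioc_lt_top.ne
    · exact hfi.mono_set (fun x hx => lt_trans ha0 hx.1)
    · exact measurableSet_Ioc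
    · intro x hx
      have hx1 : a < x := hx.1
      have hx2 : x ≤ b := hx.2
      have hx0 : 0 < x := lt_trans ha0 hx1
      have he : Real.exp (-b ^ 2 * t) ≤ Real.exp (-x ^ 2 * t) := by
        apply Real.exp_le_exp.mpr
        nlinarith [mul_self_le_mul_self hx0.le hx2]
      have htanh : K ≤ Real.tanh (Real.pi * x) := by
        rw [hK, Real.tanh_eq_sinh_div_cosh]
        apply div_le_div₀ (Real.sinh_pos_iff.mpr (by positivity)).le
          (Real.sinh_le_sinh.mpr (by nlinarith [hx1])) (Real.cosh_pos _)
          (Real.cosh_le_cosh.mpr (by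
            rw [abs_of_pos (mul_pos hπ hx0), abs_of_pos (mul_pos hπ hb)]
            nlinarith))
      have h0tanh : 0 < K := hK0
      have h0e : 0 < Real.exp (-b ^ 2 * t) := Real.exp_pos _
      exact mul_le_mul (mul_le_mul hx1.le he h0e.le hx0.le) htanh h0tanh.le
        (by positivity)
  have h3 : ∫ r in Set.Ioc a b, (a * Real.exp (-b ^ 2 * t) * K)
      = (b - a) * (a * Real.exp (-b ^ 2 * t) * K) := by
    rw [setIntegral_const, Real.volume_real_Ioc_of_le (by linarith)]
    simp [smul_eq_mul]
  unfold sigmaSTF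
  have h4 : (b - a) * (a * Real.exp (-b ^ 2 * t) * K)
      ≤ ∫ r in Set.Ioi (0:ℝ), r * Real.exp (-r ^ 2 * t) * Real.tanh (Real.pi * r) := by
    rw [← h3]; exact le_trans h2 h1
  have hc : 0 < 1 / (2 * Real.pi) := by positivity
  calc (1 / (2 * Real.pi)) * ((b - a) * (a * Real.exp (-b ^ 2 * t) * K))
      ≤ (1 / (2 * Real.pi)) * ∫ r in Set.Ioi (0:ℝ), r * Real.exp (-r ^ 2 * t) * Real.tanh (Real.pi * r) :=
        mul_le_mul_of_nonneg_left h4 hc.le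
    _ = _ := rfl

theorem stmt_14 (μ : ℝ) (lam : ℕ → ℝ) (hlam : StrictAnti lam)
    (hlam0 : lam 0 < -(1 / 4))
    (hsum : ∀ t > (0 : ℝ), Summable fun k => Real.exp (lam k * t))
    (ctil : ℝ → ℝ)
    (hctil : ∀ t, ctil t = -sigmaSTF t * Real.exp (-t / 4) * μ + ∑' k, Real.exp (lam k * t)) :
    Tendsto (fun t : ℝ => -(Real.exp (t / 4) / sigmaSTF t) * ctil t) atTop (nhds μ) := by
  have hπ : 0 < Real.pi := Real.pi_pos
  set δ : ℝ := -(lam 0 + 1/4) with hδ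
  have hδ0 : 0 < δ := by rw [hδ]; linarith
  set b : ℝ := Real.sqrt (min 1 (δ/2)) with hbdef
  have hmin : 0 < min 1 (δ/2) := lt_min one_pos (by linarith)
  have hb0 : 0 < b := Real.sqrt_pos.mpr hmin
  have hb2 : b ^ 2 = min 1 (δ/2) := Real.sq_sqrt hmin.le
  have hb2le : b ^ 2 ≤ δ/2 := hb2 ▸ min_le_right _ _
  set c0 : ℝ := (1 / (2 * Real.pi)) * ((b - b/2) * (b/2
    * (Real.sinh (Real.pi * (b/2)) / Real.cosh (Real.pi * b)))) with hc0
  have htanhpos : 0 < Real.sinh (Real.pi * (b/2)) / Real.cosh (Real.pi * b) :=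
    div_pos (Real.sinh_pos_iff.mpr (by positivity)) (Real.cosh_pos _)
  have hc00 : 0 < c0 := by
    rw [hc0]
    have : 0 < b - b/2 := by linarith
    positivity
  -- σ lower bound: c0 * exp(-b²t) ≤ σ t for t > 0
  have hσlb : ∀ t : ℝ, 0 < t → c0 * Real.exp (-b^2*t) ≤ sigmaSTF t := by
    intro t ht
    have := my_sigma_lb b hb0 t ht
    calc c0 * Real.exp (-b^2*t)
        = (1 / (2 * Real.pi)) * ((b - b / 2) * (b / 2 * Real.exp (-b ^ 2 * t)
          * (Real.sinh (Real.pi * (b/2)) / Real.cosh (Real.pi * b)))) := by rw [hc0]; ring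
      _ ≤ sigmaSTF t := this
  have hσpos : ∀ t : ℝ, 0 < t → 0 < sigmaSTF t := by
    intro t ht
    exact lt_of_lt_of_le (by positivity) (hσlb t ht)
  set C : ℝ := ∑' k, Real.exp (lam k) with hC
  have hC0 : 0 ≤ C := tsum_nonneg (fun k => (Real.exp_pos _).le)
  set S : ℝ → ℝ := fun t => ∑' k, Real.exp (lam k * t) with hS
  have hS0 : ∀ t, 0 ≤ S t := fun t => tsum_nonneg (fun k => (Real.exp_pos _).le)
  -- S t ≤ C * exp(lam 0 * (t-1)) for t ≥ 1
  have hSub : ∀ t : ℝ, 1 ≤ t → S t ≤ C * Real.exp (lam 0 * (t - 1)) := by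
    intro t ht
    have hsum1 : Summable fun k => Real.exp (lam k) := by
      simpa using hsum 1 one_pos
    have hterm : ∀ k, Real.exp (lam k * t) ≤ Real.exp (lam k) * Real.exp (lam 0 * (t-1)) := by
      intro k
      rw [← Real.exp_add, Real.exp_le_exp]
      have hk : lam k ≤ lam 0 := hlam.antitone (Nat.zero_le k)
      nlinarith
    calc S t ≤ ∑' k, Real.exp (lam k) * Real.exp (lam 0 * (t-1)) := by
          apply Summable.tsum_le_tsum hterm (hsum t (by linarith)) (hsum1.mul_right _)
      _ = C * Real.exp (lam 0 * (t-1)) := by rw [tsum_mul_right]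
  -- ratio
  set R : ℝ → ℝ := fun t => Real.exp (t/4) / sigmaSTF t * S t with hR
  have hRle : ∀ t : ℝ, 1 ≤ t → R t ≤
      (C * Real.exp (-lam 0) / c0) * Real.exp ((lam 0 + 1/4 + b^2) * t) := by
    intro t ht
    have ht0 : 0 < t := by linarith
    have hσ := hσlb t ht0
    have hσp := hσpos t ht0
    have h1 : R t ≤ Real.exp (t/4) * (C * Real.exp (lam 0 * (t-1))) / (c0 * Real.exp (-b^2*t)) := by
      have hRt : R t = Real.exp (t/4) * S t / sigmaSTF t := by
        simp only [hR]; ring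
      rw [hRt]
      apply div_le_div₀ (by positivity) _ (by positivity) hσ
      exact mul_le_mul_of_nonneg_left (hSub t ht) (Real.exp_pos _).le
    have e1 : Real.exp (t/4) * (C * Real.exp (lam 0 * (t-1))) / (c0 * Real.exp (-b^2*t))
        = (C/c0) * Real.exp (t/4 + lam 0 * (t-1) - (-b^2*t)) := by
      rw [Real.exp_sub, Real.exp_add]
      field_simp
    have e2 : t/4 + lam 0 * (t-1) - (-b^2*t) = (lam 0 + 1/4 + b^2) * t + (-lam 0) := by ring
    have e3 : (C/c0) * Real.exp ((lam 0 + 1/4 + b^2) * t + (-lam 0))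
        = (C * Real.exp (-lam 0) / c0) * Real.exp ((lam 0 + 1/4 + b^2) * t) := by
      rw [Real.exp_add]; ring
    calc R t ≤ Real.exp (t/4) * (C * Real.exp (lam 0 * (t-1))) / (c0 * Real.exp (-b^2*t)) := h1
      _ = (C * Real.exp (-lam 0) / c0) * Real.exp ((lam 0 + 1/4 + b^2) * t) := by
          rw [e1, e2, e3]
  have hR0 : ∀ t : ℝ, 1 ≤ t → 0 ≤ R t := by
    intro t ht
    have h := hσpos t (by linarith)
    have : R t = Real.exp (t/4) / sigmaSTF t * S t := by simp only [hR]
    rw [this]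
    exact mul_nonneg (by positivity) (hS0 t)
  -- RHS → 0
  have hcoef : lam 0 + 1/4 + b^2 < 0 := by
    have : lam 0 + 1/4 = -δ := by rw [hδ]; ring
    linarith
  have hRHS : Tendsto (fun t : ℝ => (C * Real.exp (-lam 0) / c0)
      * Real.exp ((lam 0 + 1/4 + b^2) * t)) atTop (nhds 0) := by
    rw [show (0:ℝ) = (C * Real.exp (-lam 0) / c0) * 0 by ring]
    apply Tendsto.const_mul
    apply Real.tendsto_exp_atBot.comp
    exact tendsto_id.const_mul_atTop_of_neg hcoef
  have hRto0 : Tendsto R atTop (nhds 0) :=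
    tendsto_of_tendsto_of_tendsto_of_le_of_le' tendsto_const_nhds hRHS
      (eventually_atTop.mpr ⟨1, hR0⟩) (eventually_atTop.mpr ⟨1, hRle⟩)
  -- final
  have heq : ∀ t : ℝ, 1 ≤ t →
      -(Real.exp (t / 4) / sigmaSTF t) * ctil t = μ - R t := by
    intro t ht
    have ht0 : 0 < t := by linarith
    have hσp := (hσpos t ht0).ne'
    have hexp : Real.exp (t/4) * Real.exp (-t/4) = 1 := by
      rw [← Real.exp_add, show t/4 + -t/4 = 0 by ring, Real.exp_zero]
    rw [hctil t]
    have step : -(Real.exp (t / 4) / sigmaSTF t)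
          * (-sigmaSTF t * Real.exp (-t / 4) * μ + ∑' k, Real.exp (lam k * t))
        = (Real.exp (t/4) * Real.exp (-t/4)) * μ * (sigmaSTF t / sigmaSTF t) - R t := by
      simp only [hR, hS]
      field_simp
      ring
    rw [step, hexp, div_self hσp]
    ring
  have : Tendsto (fun t : ℝ => μ - R t) atTop (nhds μ) := by
    have h := tendsto_const_nhds (α := ℝ) (x := μ) (f := atTop) |>.sub hRto0
    simpa using h
  apply this.congr'
  filter_upwards [eventually_ge_atTop (1:ℝ)] with t ht
  exact (heq t ht).symm
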